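/- Let 𝒳 and 𝒴 be bounded subsets of the Gromov–Hausdorff space M. Then there exists a map f : 𝒳 × 𝒴 → M such that for all X, X' ∈ 𝒳 and Y, Y' ∈ 𝒴, d_GH(f(X,Y), f(X',Y')) = max(d_GH(X,X'), d_GH(Y,Y')); that is, the product 𝒳 × 𝒴 equipped with the ℓ∞ (maximum) product distance embeds isometrically into M. -/

import Mathlib

/-!
Given spaces `X ∈ 𝒳` and `Y ∈ 𝒴`, all of diameter at most `D` and at mutual distances at most `D`,
glue `X`, `Y` and a point into a "weighted star": the three pieces keep their own metrics and
points of pieces `i ≠ j` are at distance `ρ i + ρ j`, with weights `ρ = (D, 4D, 7D)`.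
Gluing optimal couplings piece by piece shows that the Gromov–Hausdorff distance of two such stars
is at most `max (d_GH(X, X')) (d_GH(Y, Y'))`. Conversely, in an optimal coupling of two stars at
distance `r ≤ D`, a point of piece `i` can only be `r`-close to a point of the same piece `i`:
the cross distances `ρ i + ρ j` are `2D`-separated, and the point piece rules out a matching that
swaps the pieces of `X` and `Y`. So the pieces are matched individually, and
`d_GH(X, X'), d_GH(Y, Y') ≤ r`.
-/

open GromovHausdorff Metric Set

namespace Metric

variable {α : Type*} [PseudoMetricSpace α] {s t : Set α} {x : α}

theorem exists_mem_dist_le_hausdorffDist (hs : Bornology.IsBounded s) (ht : IsCompact t)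
    (ht' : t.Nonempty) (hx : x ∈ s) : ∃ y ∈ t, dist x y ≤ hausdorffDist s t := by
  obtain ⟨y, hy, hxy⟩ := ht.exists_infDist_eq_dist ht' x
  refine ⟨y, hy, hxy ▸ infDist_le_hausdorffDist_of_mem hx ?_⟩
  exact hausdorffEDist_ne_top_of_nonempty_of_bounded ⟨x, hx⟩ ht' hs ht.isBounded

end Metric

namespace GromovHausdorff

variable {X Y : Type*} [MetricSpace X] [CompactSpace X] [Nonempty X]
  [MetricSpace Y] [CompactSpace Y] [Nonempty Y]

theorem exists_dist_optimalGHInjl_le (x : X) :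
    ∃ y, dist (optimalGHInjl X Y x) (optimalGHInjr X Y y) ≤ ghDist X Y := by
  obtain ⟨_, ⟨y, rfl⟩, h⟩ := exists_mem_dist_le_hausdorffDist
    (isCompact_range (isometry_optimalGHInjl X Y).continuous).isBounded
    (isCompact_range (isometry_optimalGHInjr X Y).continuous) (range_nonempty _)
    (mem_range_self x)
  rw [hausdorffDist_optimal] at h
  exact ⟨y, h⟩

theorem exists_dist_optimalGHInjr_le (y : Y) :
    ∃ x, dist (optimalGHInjl X Y x) (optimalGHInjr X Y y) ≤ ghDist X Y := by
  obtain ⟨_, ⟨x, rfl⟩, h⟩ := exists_mem_dist_le_hausdorffDist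
    (isCompact_range (isometry_optimalGHInjr X Y).continuous).isBounded
    (isCompact_range (isometry_optimalGHInjl X Y).continuous) (range_nonempty _)
    (mem_range_self y)
  rw [hausdorffDist_comm, hausdorffDist_optimal, dist_comm] at h
  exact ⟨x, h⟩

theorem optimalGHInjl_or_optimalGHInjr (z : OptimalGHCoupling X Y) :
    (∃ x, optimalGHInjl X Y x = z) ∨ ∃ y, optimalGHInjr X Y y = z := by
  obtain ⟨x | y, rfl⟩ := Quotient.mk''_surjective z
  exacts [.inl ⟨x, rfl⟩, .inr ⟨y, rfl⟩]

theorem dist_le_add_ghDist {D : ℝ} (hX : ∀ x x' : X, dist x x' ≤ D)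
    (hY : ∀ y y' : Y, dist y y' ≤ D) (z w : OptimalGHCoupling X Y) :
    dist z w ≤ D + ghDist X Y := by
  have hl := (isometry_optimalGHInjl X Y).dist_eq
  have hr := (isometry_optimalGHInjr X Y).dist_eq
  have hGH : 0 ≤ ghDist X Y := dist_nonneg
  have mixed : ∀ x y, dist (optimalGHInjl X Y x) (optimalGHInjr X Y y) ≤ D + ghDist X Y := by
    intro x y
    obtain ⟨y', hy'⟩ := exists_dist_optimalGHInjl_le (Y := Y) x
    calc _ ≤ dist (optimalGHInjl X Y x) (optimalGHInjr X Y y')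
          + dist (optimalGHInjr X Y y') (optimalGHInjr X Y y) := dist_triangle _ _ _
      _ ≤ D + ghDist X Y := by rw [hr]; linarith [hY y' y]
  rcases optimalGHInjl_or_optimalGHInjr z with ⟨x, rfl⟩ | ⟨y, rfl⟩ <;>
    rcases optimalGHInjl_or_optimalGHInjr w with ⟨x', rfl⟩ | ⟨y', rfl⟩
  · rw [hl]; linarith [hX x x']
  · exact mixed x y'
  · rw [dist_comm]; exact mixed x' y
  · rw [hr]; linarith [hY y y']

theorem dist_le_diam_add_two_mul_ghDist (x x' : X) :
    dist x x' ≤ diam (univ : Set Y) + 2 * ghDist X Y := by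
  obtain ⟨y, hy⟩ := exists_dist_optimalGHInjl_le (Y := Y) x
  obtain ⟨y', hy'⟩ := exists_dist_optimalGHInjl_le (Y := Y) x'
  have hyy' : dist y y' ≤ diam (univ : Set Y) :=
    dist_le_diam_of_mem isCompact_univ.isBounded (mem_univ _) (mem_univ _)
  rw [← (isometry_optimalGHInjr X Y).dist_eq] at hyy'
  rw [← (isometry_optimalGHInjl X Y).dist_eq, dist_comm (optimalGHInjl X Y x')] at *
  linarith [dist_triangle4 (optimalGHInjl X Y x) (optimalGHInjr X Y y)
    (optimalGHInjr X Y y') (optimalGHInjl X Y x')]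

end GromovHausdorff

/-- The pieces `F i` placed at distance `ρ i` from a common centre. -/
structure WeightedStar {ι : Type*} (ρ : ι → ℝ) (F : ι → Type*) where
  idx : ι
  pt : F idx

namespace WeightedStar

section General

variable {ι : Type*} {ρ : ι → ℝ} {F G H : ι → Type*}

instance [Nonempty ι] [∀ i, Nonempty (F i)] : Nonempty (WeightedStar ρ F) :=
  let i := Classical.arbitrary ι; ⟨⟨i, Classical.arbitrary _⟩⟩

def map (φ : ∀ i, F i → G i) (p : WeightedStar ρ F) : WeightedStar ρ G :=
  ⟨p.idx, φ p.idx p.pt⟩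

variable [∀ i, MetricSpace (F i)]

def Admissible (ρ : ι → ℝ) (F : ι → Type*) [∀ i, MetricSpace (F i)] : Prop :=
  (∀ i, 0 < ρ i) ∧ ∀ i (x y : F i), dist x y ≤ 2 * ρ i

open Classical in
noncomputable instance : Dist (WeightedStar ρ F) where
  dist p q := if h : p.idx = q.idx then dist (h ▸ p.pt) q.pt else ρ p.idx + ρ q.idx

theorem dist_mk_mk (i : ι) (x y : F i) : dist (mk i x : WeightedStar ρ F) (mk i y) = dist x y :=
  dif_pos rfl

theorem dist_mk_mk_of_ne {i j : ι} (h : i ≠ j) (x : F i) (y : F j) :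
    dist (mk i x : WeightedStar ρ F) (mk j y) = ρ i + ρ j :=
  dif_neg h

protected theorem dist_triangle (hF : Admissible ρ F) (p q r : WeightedStar ρ F) :
    dist p r ≤ dist p q + dist q r := by
  obtain ⟨i, x⟩ := p; obtain ⟨j, y⟩ := q; obtain ⟨k, z⟩ := r
  have hρ := hF.1
  rcases eq_or_ne i j with rfl | hij
  · rcases eq_or_ne i k with rfl | hik
    · simp only [dist_mk_mk]; exact dist_triangle x y z
    · rw [dist_mk_mk, dist_mk_mk_of_ne hik, dist_mk_mk_of_ne hik]
      linarith [dist_nonneg (x := x) (y := y)]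
  rcases eq_or_ne j k with rfl | hjk
  · rw [dist_mk_mk, dist_mk_mk_of_ne hij, dist_mk_mk_of_ne hij]
    linarith [dist_nonneg (x := y) (y := z)]
  rcases eq_or_ne i k with rfl | hik
  · rw [dist_mk_mk, dist_mk_mk_of_ne hij, dist_mk_mk_of_ne hjk]; linarith [hF.2 i x z, hρ j]
  · rw [dist_mk_mk_of_ne hik, dist_mk_mk_of_ne hij, dist_mk_mk_of_ne hjk]; linarith [hρ j]

noncomputable instance [hF : Fact (Admissible ρ F)] : MetricSpace (WeightedStar ρ F) where
  dist_self := fun ⟨i, x⟩ => (dist_mk_mk i x x).trans (dist_self x)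
  dist_comm := by
    rintro ⟨i, x⟩ ⟨j, y⟩
    rcases eq_or_ne i j with rfl | h
    · rw [dist_mk_mk, dist_mk_mk, dist_comm]
    · rw [dist_mk_mk_of_ne h, dist_mk_mk_of_ne h.symm, add_comm]
  dist_triangle := WeightedStar.dist_triangle hF.out
  eq_of_dist_eq_zero := by
    rintro ⟨i, x⟩ ⟨j, y⟩ h
    rcases eq_or_ne i j with rfl | hij
    · rw [dist_mk_mk] at h; rw [eq_of_dist_eq_zero h]
    · rw [dist_mk_mk_of_ne hij] at h; linarith [hF.out.1 i, hF.out.1 j]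

variable [Fact (Admissible ρ F)]

theorem isometry_mk (i : ι) : Isometry (mk i : F i → WeightedStar ρ F) :=
  Isometry.of_dist_eq (dist_mk_mk i)

instance [Finite ι] [∀ i, CompactSpace (F i)] : CompactSpace (WeightedStar ρ F) where
  isCompact_univ := by
    have : (univ : Set (WeightedStar ρ F)) = ⋃ i, range (mk i) := by
      ext ⟨i, x⟩; simp
    rw [this]
    exact isCompact_iUnion fun i => isCompact_range (isometry_mk i).continuous

theorem hausdorffDist_range_map_le {φ : ∀ i, G i → F i} {ψ : ∀ i, H i → F i} {r : ℝ}
    (hr : 0 ≤ r) (hφ : ∀ i x, ∃ y, dist (φ i x) (ψ i y) ≤ r)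
    (hψ : ∀ i y, ∃ x, dist (φ i x) (ψ i y) ≤ r) :
    hausdorffDist (range (map φ : WeightedStar ρ G → _)) (range (map ψ : WeightedStar ρ H → _))
      ≤ r := by
  refine hausdorffDist_le_of_mem_dist hr ?_ ?_
  · rintro _ ⟨⟨i, x⟩, rfl⟩
    obtain ⟨y, hy⟩ := hφ i x
    exact ⟨_, mem_range_self (mk i y), (dist_mk_mk _ _ _).trans_le hy⟩
  · rintro _ ⟨⟨i, y⟩, rfl⟩
    obtain ⟨x, hx⟩ := hψ i y
    exact ⟨_, mem_range_self (mk i x), (dist_mk_mk _ _ _).trans_le (dist_comm (φ i x) _ ▸ hx)⟩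

variable [∀ i, MetricSpace (G i)] [Fact (Admissible ρ G)]

theorem isometry_map {φ : ∀ i, F i → G i} (hφ : ∀ i, Isometry (φ i)) :
    Isometry (map φ : WeightedStar ρ F → WeightedStar ρ G) := by
  refine Isometry.of_dist_eq ?_
  rintro ⟨i, x⟩ ⟨j, y⟩
  rcases eq_or_ne i j with rfl | h
  · exact ((dist_mk_mk _ _ _).trans ((hφ i).dist_eq x y)).trans (dist_mk_mk _ _ _).symm
  · exact (dist_mk_mk_of_ne h _ _).trans (dist_mk_mk_of_ne h _ _).symm

theorem ghDist_le_of_forall_ghDist_le [Finite ι] [Nonempty ι]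
    [∀ i, CompactSpace (F i)] [∀ i, Nonempty (F i)] [∀ i, CompactSpace (G i)]
    [∀ i, Nonempty (G i)] {D r : ℝ} (hρ : ∀ i, D ≤ ρ i)
    (hF : ∀ i (x y : F i), dist x y ≤ D) (hG : ∀ i (x y : G i), dist x y ≤ D)
    (hr : ∀ i, ghDist (F i) (G i) ≤ r) (hrD : r ≤ D) :
    ghDist (WeightedStar ρ F) (WeightedStar ρ G) ≤ r := by
  have : Fact (Admissible ρ fun i => OptimalGHCoupling (F i) (G i)) :=
    ⟨(Fact.out : Admissible ρ F).1, fun i z w => by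
      linarith [dist_le_add_ghDist (hF i) (hG i) z w, hr i, hρ i]⟩
  have hr0 : 0 ≤ r := dist_nonneg.trans (hr (Classical.arbitrary ι))
  calc ghDist (WeightedStar ρ F) (WeightedStar ρ G)
      ≤ hausdorffDist (range (map fun i => optimalGHInjl (F i) (G i)))
          (range (map fun i => optimalGHInjr (F i) (G i))) :=
        ghDist_le_hausdorffDist (isometry_map fun i => isometry_optimalGHInjl _ _)
          (isometry_map fun i => isometry_optimalGHInjr _ _)
    _ ≤ r := hausdorffDist_range_map_le hr0
        (fun i x => (exists_dist_optimalGHInjl_le x).imp fun _ h => h.trans (hr i))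
        (fun i y => (exists_dist_optimalGHInjr_le y).imp fun _ h => h.trans (hr i))

end General

section ThreePieces

variable {ρ : Fin 3 → ℝ} {F G : Fin 3 → Type*} [∀ i, MetricSpace (F i)]
  [∀ i, MetricSpace (G i)] [Fact (Admissible ρ F)] [Fact (Admissible ρ G)] {D r : ℝ}

theorem idx_eq_of_dist_le [∀ i, Nonempty (F i)] {W : Type*} [PseudoMetricSpace W]
    {Φ : WeightedStar ρ F → W} {Ψ : WeightedStar ρ G → W} (hΦ : Isometry Φ) (hΨ : Isometry Ψ)
    (hρ : ∀ i, D ≤ ρ i) (hsep : ∀ i j, i ≠ j → 2 * D < |ρ i - ρ j|)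
    (hG : ∀ i (x y : G i), dist x y ≤ D) (hrD : r ≤ D) (hnear : ∀ p, ∃ q, dist (Φ p) (Ψ q) ≤ r)
    {p : WeightedStar ρ F} {q : WeightedStar ρ G} (hpq : dist (Φ p) (Ψ q) ≤ r) :
    q.idx = p.idx := by
  obtain ⟨i, x⟩ := p
  obtain ⟨j, y⟩ := q
  by_contra hji
  obtain ⟨k, hki, hkj⟩ : ∃ k, k ≠ i ∧ k ≠ j := by
    have : ∀ i j : Fin 3, ∃ k, k ≠ i ∧ k ≠ j := by decide
    exact this i j
  obtain ⟨x'⟩ := (inferInstance : Nonempty (F k))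
  obtain ⟨⟨m, y'⟩, hx'y'⟩ := hnear ⟨k, x'⟩
  have hD : 0 ≤ D := (dist_nonneg.trans hpq).trans hrD
  -- `Ψ` is `r`-close to the isometry `Φ`: it moves `ρ i + ρ k` by at most `2 r ≤ 2 D`
  have hclose : |dist (mk j y : WeightedStar ρ G) (mk m y') - (ρ i + ρ k)| ≤ 2 * D := by
    have hik : dist (Φ ⟨i, x⟩) (Φ ⟨k, x'⟩) = ρ i + ρ k := by
      rw [hΦ.dist_eq, dist_mk_mk_of_ne (Ne.symm hki)]
    rw [← hik, ← hΨ.dist_eq, abs_sub_le_iff]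
    constructor <;> linarith [dist_triangle4 (Ψ ⟨j, y⟩) (Φ ⟨i, x⟩) (Φ ⟨k, x'⟩) (Ψ ⟨m, y'⟩),
      dist_triangle4 (Φ ⟨i, x⟩) (Ψ ⟨j, y⟩) (Ψ ⟨m, y'⟩) (Φ ⟨k, x'⟩),
      dist_comm (Φ ⟨i, x⟩) (Ψ ⟨j, y⟩), dist_comm (Φ ⟨k, x'⟩) (Ψ ⟨m, y'⟩)]
  rcases eq_or_ne m j with rfl | hmj
  · rw [dist_mk_mk] at hclose
    have := hG m y y'
    rcases lt_abs.mp (hsep i k (Ne.symm hki)) with h | h <;>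
      linarith [abs_le.mp hclose, hρ i, hρ k]
  · rw [dist_mk_mk_of_ne (Ne.symm hmj)] at hclose
    have : m = i ∨ m = k := by
      have : ∀ i j k m : Fin 3, j ≠ i → k ≠ i → k ≠ j → m ≠ j → m = i ∨ m = k := by decide
      exact this i j k m hji hki hkj hmj
    rcases this with rfl | rfl
    · rcases lt_abs.mp (hsep j k (Ne.symm hkj)) with h | h <;> linarith [abs_le.mp hclose]
    · rcases lt_abs.mp (hsep j i hji) with h | h <;> linarith [abs_le.mp hclose]

theorem ghDist_le_ghDist_weightedStar [∀ i, CompactSpace (F i)] [∀ i, Nonempty (F i)]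
    [∀ i, CompactSpace (G i)] [∀ i, Nonempty (G i)]
    (hρ : ∀ i, D ≤ ρ i) (hsep : ∀ i j, i ≠ j → 2 * D < |ρ i - ρ j|)
    (hF : ∀ i (x y : F i), dist x y ≤ D) (hG : ∀ i (x y : G i), dist x y ≤ D)
    (hD : ghDist (WeightedStar ρ F) (WeightedStar ρ G) ≤ D) (i : Fin 3) :
    ghDist (F i) (G i) ≤ ghDist (WeightedStar ρ F) (WeightedStar ρ G) := by
  set Φ := optimalGHInjl (WeightedStar ρ F) (WeightedStar ρ G)
  set Ψ := optimalGHInjr (WeightedStar ρ F) (WeightedStar ρ G)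
  have hΦ : Isometry Φ := isometry_optimalGHInjl _ _
  have hΨ : Isometry Ψ := isometry_optimalGHInjr _ _
  have hnearΦ : ∀ p, ∃ q, dist (Φ p) (Ψ q) ≤ ghDist (WeightedStar ρ F) (WeightedStar ρ G) :=
    exists_dist_optimalGHInjl_le
  have hnearΨ : ∀ q, ∃ p, dist (Ψ q) (Φ p) ≤ ghDist (WeightedStar ρ F) (WeightedStar ρ G) :=
    fun q => (exists_dist_optimalGHInjr_le q).imp fun _ h => dist_comm (Φ _) (Ψ q) ▸ h
  calc ghDist (F i) (G i) ≤ hausdorffDist (range (Φ ∘ mk i)) (range (Ψ ∘ mk i)) :=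
        ghDist_le_hausdorffDist (hΦ.comp (isometry_mk i)) (hΨ.comp (isometry_mk i))
    _ ≤ _ := by
      refine hausdorffDist_le_of_mem_dist dist_nonneg ?_ ?_
      · rintro _ ⟨x, rfl⟩
        obtain ⟨⟨j, y⟩, hxy⟩ := hnearΦ ⟨i, x⟩
        obtain rfl : j = i := idx_eq_of_dist_le hΦ hΨ hρ hsep hG hD hnearΦ hxy
        exact ⟨_, mem_range_self y, hxy⟩
      · rintro _ ⟨y, rfl⟩
        obtain ⟨⟨j, x⟩, hyx⟩ := hnearΨ ⟨i, y⟩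
        obtain rfl : j = i := idx_eq_of_dist_le hΨ hΦ hρ hsep hF hD hnearΨ hyx
        exact ⟨_, mem_range_self x, hyx⟩

end ThreePieces

end WeightedStar
namespace GromovHausdorff.GHSpace

def starPieces (p q : GHSpace) : Fin 3 → Type
  | 0 => p.Rep
  | 1 => q.Rep
  | 2 => PUnit

noncomputable instance (p q : GHSpace) : ∀ i, MetricSpace (starPieces p q i)
  | 0 => inferInstanceAs (MetricSpace p.Rep)
  | 1 => inferInstanceAs (MetricSpace q.Rep)
  | 2 => inferInstanceAs (MetricSpace PUnit)

instance (p q : GHSpace) : ∀ i, CompactSpace (starPieces p q i)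
  | 0 => inferInstanceAs (CompactSpace p.Rep)
  | 1 => inferInstanceAs (CompactSpace q.Rep)
  | 2 => inferInstanceAs (CompactSpace PUnit)

instance (p q : GHSpace) : ∀ i, Nonempty (starPieces p q i)
  | 0 => inferInstanceAs (Nonempty p.Rep)
  | 1 => inferInstanceAs (Nonempty q.Rep)
  | 2 => inferInstanceAs (Nonempty PUnit)

variable {D : ℝ} {p q p' q' : GHSpace}

theorem starPieces_dist_le (hD : 0 ≤ D) (hp : ∀ x y : p.Rep, dist x y ≤ D)
    (hq : ∀ x y : q.Rep, dist x y ≤ D) : ∀ i (x y : starPieces p q i), dist x y ≤ D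
  | 0 => hp
  | 1 => hq
  | 2 => fun _ _ => hD

theorem ghDist_starPieces_le (r : ℝ) (hp : dist p p' ≤ r) (hq : dist q q' ≤ r) :
    ∀ i, ghDist (starPieces p q i) (starPieces p' q' i) ≤ r
  | 0 => (dist_ghDist p p').symm.trans_le hp
  | 1 => (dist_ghDist q q').symm.trans_le hq
  | 2 => (dist_self _).trans_le (dist_nonneg.trans hp)

def starWeight (D : ℝ) (i : Fin 3) : ℝ := (3 * (i : ℕ) + 1) * D

theorem le_starWeight (hD : 0 ≤ D) (i : Fin 3) : D ≤ starWeight D i := by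
  unfold starWeight; nlinarith [(Nat.cast_nonneg (i : ℕ) : (0 : ℝ) ≤ i)]

theorem starWeight_sep (hD : 0 < D) {i j : Fin 3} (hij : i ≠ j) :
    2 * D < |starWeight D i - starWeight D j| := by
  rw [lt_abs]
  fin_cases i <;> fin_cases j <;> simp [starWeight] at hij ⊢ <;>
    first | (left; linarith) | (right; linarith)

theorem admissible_starWeight (hD : 0 < D) (hp : ∀ x y : p.Rep, dist x y ≤ D)
    (hq : ∀ x y : q.Rep, dist x y ≤ D) :
    WeightedStar.Admissible (starWeight D) (starPieces p q) :=
  ⟨fun i => hD.trans_le (le_starWeight hD.le i), fun i x y => by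
    linarith [starPieces_dist_le hD.le hp hq i x y, le_starWeight hD.le i]⟩

noncomputable def starGlue (hD : 0 < D) (p q : GHSpace) (hp : ∀ x y : p.Rep, dist x y ≤ D)
    (hq : ∀ x y : q.Rep, dist x y ≤ D) : GHSpace :=
  have : Fact (WeightedStar.Admissible (starWeight D) (starPieces p q)) :=
    ⟨admissible_starWeight hD hp hq⟩
  toGHSpace (WeightedStar (starWeight D) (starPieces p q))

theorem dist_starGlue (hD : 0 < D) (hp : ∀ x y : p.Rep, dist x y ≤ D)
    (hq : ∀ x y : q.Rep, dist x y ≤ D) (hp' : ∀ x y : p'.Rep, dist x y ≤ D)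
    (hq' : ∀ x y : q'.Rep, dist x y ≤ D) (hpp' : dist p p' ≤ D) (hqq' : dist q q' ≤ D) :
    dist (starGlue hD p q hp hq) (starGlue hD p' q' hp' hq') = max (dist p p') (dist q q') := by
  have : Fact (WeightedStar.Admissible (starWeight D) (starPieces p q)) :=
    ⟨admissible_starWeight hD hp hq⟩
  have : Fact (WeightedStar.Admissible (starWeight D) (starPieces p' q')) :=
    ⟨admissible_starWeight hD hp' hq'⟩
  have hF := starPieces_dist_le hD.le hp hq
  have hG := starPieces_dist_le hD.le hp' hq'
  have hle : dist (starGlue hD p q hp hq) (starGlue hD p' q' hp' hq')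
      ≤ max (dist p p') (dist q q') :=
    WeightedStar.ghDist_le_of_forall_ghDist_le (le_starWeight hD.le) hF hG
      (ghDist_starPieces_le _ (le_max_left _ _) (le_max_right _ _)) (max_le hpp' hqq')
  have hge := WeightedStar.ghDist_le_ghDist_weightedStar (le_starWeight hD.le)
    (fun _ _ => starWeight_sep hD) hF hG (hle.trans (max_le hpp' hqq'))
  exact hle.antisymm (max_le ((dist_ghDist p p').trans_le (hge 0))
    ((dist_ghDist q q').trans_le (hge 1)))

theorem exists_pos_forall_dist_le_of_isBounded {𝒮 : Set GHSpace} (h : Bornology.IsBounded 𝒮) :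
    ∃ D > 0, (∀ p ∈ 𝒮, ∀ q ∈ 𝒮, dist p q ≤ D) ∧ ∀ p ∈ 𝒮, ∀ x y : p.Rep, dist x y ≤ D := by
  set c : GHSpace := default
  obtain ⟨R, hR⟩ := h.subset_closedBall c
  have hdiam : 0 ≤ diam (univ : Set c.Rep) := diam_nonneg
  have hmax := le_max_left (diam (univ : Set c.Rep) + 2 * R) 1
  refine ⟨max (diam (univ : Set c.Rep) + 2 * R) 1, by positivity, ?_, ?_⟩
  · intro p hp q hq
    linarith [dist_triangle_right p q c, mem_closedBall.mp (hR hp), mem_closedBall.mp (hR hq)]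
  · intro p hp x y
    linarith [dist_le_diam_add_two_mul_ghDist (Y := c.Rep) x y, dist_ghDist p c,
      mem_closedBall.mp (hR hp)]

end GromovHausdorff.GHSpace

open GromovHausdorff.GHSpace in
theorem bounded_subsets_linfty_prod_embeds (𝒳 𝒴 : Set GHSpace)
    (h𝒳 : Bornology.IsBounded 𝒳) (h𝒴 : Bornology.IsBounded 𝒴) :
    ∃ f : 𝒳 × 𝒴 → GHSpace,
      ∀ (X X' : 𝒳) (Y Y' : 𝒴),
        dist (f (X, Y)) (f (X', Y')) =
          max (dist (X : GHSpace) (X' : GHSpace)) (dist (Y : GHSpace) (Y' : GHSpace)) := by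
  obtain ⟨D, hD, hdist, hdiam⟩ := exists_pos_forall_dist_le_of_isBounded (h𝒳.union h𝒴)
  refine ⟨fun z => starGlue hD z.1 z.2 (hdiam _ (.inl z.1.2)) (hdiam _ (.inr z.2.2)),
    fun X X' Y Y' => ?_⟩
  exact dist_starGlue hD _ _ _ _ (hdist _ (.inl X.2) _ (.inl X'.2))
    (hdist _ (.inr Y.2) _ (.inr Y'.2))
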